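/- arXiv:2006.16398 — 2 statements merged into one kernel-verified Lean document; each statement's English description precedes it below -/
import Mathlib

section
/- (Lemma 1) Suppose φ'' ∈ WLSC(α−2, c, x₀) for some c ∈ (0,1], x₀ ≥ 0 and α > 0. Then there exists a constant C > 0 such that for all w > x₀ and all λ ∈ ℝ, Re(φ(w) − φ(w + iλ)) ≥ C λ² φ''(max(|λ|, w)); here φ denotes the holomorphic extension of the Laplace exponent to {Re z > 0}, for which Re(φ(w) − φ(w+iλ)) = σ²λ² + ∫_{(0,∞)} (1 − cos(λs)) e^{−ws} ν(ds). -/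
/-!
Write `m = max |λ| w` and `J t = ∫ x² e^{-tx} ν(dx)`, so that `φ'' t = 2σ² + J t`. On `(0, π/m]`
one has `1 - cos (λx) ≥ (2/π²) λ² x²` and `e^{-wx} ≥ e^{-Kmx}`, while beyond `π/m` the integral of
`x² e^{-Kmx}` is at most `e^{-(K-1)π} J m`. Weak lower scaling gives `φ''(Km) ≥ c K^{α-2} φ'' m`,
and since exponential decay beats any power, `K` can be chosen with `e^{-(K-1)π} ≤ (c/2) K^{α-2}`:
the part of `J (Km)` on `(0, π/m]` then still carries half of the scaling bound.
-/

open MeasureTheory Real Set Filter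

noncomputable section

/-- Weak lower scaling property at infinity: `f(l*x) ≥ c * l^τ * f(x)` for `l ≥ 1`, `x > x₁`. -/
def WLSC (f : ℝ → ℝ) (τ c x₁ : ℝ) : Prop :=
  ∀ l : ℝ, 1 ≤ l → ∀ x : ℝ, x₁ < x → c * l ^ τ * f x ≤ f (l * x)

/-- Weak upper scaling property at infinity: `f(l*x) ≤ C * l^τ * f(x)` for `l ≥ 1`, `x > x₁`. -/
def WUSC (f : ℝ → ℝ) (τ C x₁ : ℝ) : Prop :=
  ∀ l : ℝ, 1 ≤ l → ∀ x : ℝ, x₁ < x → f (l * x) ≤ C * l ^ τ * f x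

/-- The Pruitt function `K(r) = σ²/r² + r⁻² ∫_{(0,r)} s² ν(ds)`. -/
def pruittK (σ : ℝ) (ν : Measure ℝ) (r : ℝ) : ℝ :=
  σ ^ 2 / r ^ 2 + (∫ s in Ioo (0:ℝ) r, s ^ 2 ∂ν) / r ^ 2

/-- The Pruitt function `h(r) = σ²/r² + ∫_{(0,∞)} min(1, s²/r²) ν(ds)`. -/
def pruittH (σ : ℝ) (ν : Measure ℝ) (r : ℝ) : ℝ :=
  σ ^ 2 / r ^ 2 + ∫ s in Ioi (0:ℝ), min 1 (s ^ 2 / r ^ 2) ∂ν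

/-- The real part of the characteristic exponent:
`Re ψ(ξ) = σ²ξ² + ∫_{(0,∞)} (1 − cos(ξx)) ν(dx)`. -/
def rePsi (σ : ℝ) (ν : Measure ℝ) (ξ : ℝ) : ℝ :=
  σ ^ 2 * ξ ^ 2 + ∫ x in Ioi (0:ℝ), (1 - Real.cos (ξ * x)) ∂ν

/-- `ψ*(r) = sup_{|z| ≤ r} Re ψ(z)`. -/
def psiStar (σ : ℝ) (ν : Measure ℝ) (r : ℝ) : ℝ :=
  sSup (rePsi σ ν '' {z : ℝ | |z| ≤ r})

/-- `ψ⁻¹(s) = sup{r > 0 : ψ*(r) = s}`. -/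
def psiInv (σ : ℝ) (ν : Measure ℝ) (s : ℝ) : ℝ :=
  sSup {r : ℝ | 0 < r ∧ psiStar σ ν r = s}

/-- `Φ(x) = x² φ''(x)`. -/
def bigPhi (φ'' : ℝ → ℝ) (x : ℝ) : ℝ := x ^ 2 * φ'' x

/-- `Φ*(r) = sup_{0 < s ≤ r} Φ(s)`. -/
def bigPhiStar (φ'' : ℝ → ℝ) (r : ℝ) : ℝ := sSup (bigPhi φ'' '' Ioc (0:ℝ) r)

/-- `Φ⁻¹(s) = sup{r > 0 : Φ*(r) = s}`. -/
def bigPhiInv (φ'' : ℝ → ℝ) (s : ℝ) : ℝ := sSup {r : ℝ | 0 < r ∧ bigPhiStar φ'' r = s}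

/-- The characteristic (Lévy–Khintchine) exponent
`ψ(ξ) = σ²ξ² − ibξ − ∫_{(0,∞)} (e^{iξx} − 1 − iξx 1_{x<1}) ν(dx)`. -/
def charExp (σ b : ℝ) (ν : Measure ℝ) (ξ : ℝ) : ℂ :=
  (σ : ℂ) ^ 2 * (ξ : ℂ) ^ 2 - Complex.I * (b : ℂ) * (ξ : ℂ) -
    ∫ x in Ioi (0:ℝ), (Complex.exp (Complex.I * (ξ : ℂ) * (x : ℂ)) - 1 -
      Complex.I * (ξ : ℂ) * (x : ℂ) * (if x < 1 then (1:ℂ) else 0)) ∂ν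

/-- The holomorphic extension of the Laplace exponent to `{Re z > 0}`. -/
def laplaceC (σ b : ℝ) (ν : Measure ℝ) (z : ℂ) : ℂ :=
  (σ : ℂ) ^ 2 * z ^ 2 - (b : ℂ) * z +
    ∫ x in Ioi (0:ℝ), (Complex.exp (-(z * (x : ℂ))) - 1 +
      z * (x : ℂ) * (if x < 1 then (1:ℂ) else 0)) ∂ν

/-- `b_r = b + ∫_{(0,∞)} s (1_{s<r} − 1_{s<1}) ν(ds)`. -/
def brFn (b : ℝ) (ν : Measure ℝ) (r : ℝ) : ℝ :=
  b + ∫ s in Ioi (0:ℝ), s * ((if s < r then (1:ℝ) else 0) - (if s < 1 then (1:ℝ) else 0)) ∂ν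

/-- The majorant `η`: `η(0) = ∞`, `η(s) = s⁻¹ Φ*(1/s)` for `0 < s < 1/x₀`,
and `η(s) = A s⁻¹ |φ(1/s)|` for `s ≥ 1/x₀`, where `A = Φ*(x₀)/|φ(x₀)|`. -/
def etaFn (φ φ'' : ℝ → ℝ) (x₀ : ℝ) (s : ℝ) : ENNReal :=
  if s ≤ 0 then ⊤
  else if x₀ * s < 1 then ENNReal.ofReal (s⁻¹ * bigPhiStar φ'' s⁻¹)
  else ENNReal.ofReal ((bigPhiStar φ'' x₀ / |φ x₀|) * s⁻¹ * |φ s⁻¹|)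

section LaplaceExponent

variable {ν : Measure ℝ}

lemma integrableOn_min_one_sq_of_lintegral_ne_top
    (hint : ∫⁻ x in Ioi (0:ℝ), ENNReal.ofReal (min 1 (x ^ 2)) ∂ν ≠ ⊤) :
    IntegrableOn (fun x : ℝ => min 1 (x ^ 2)) (Ioi 0) ν := by
  refine ⟨(continuous_const.min (continuous_pow 2)).aestronglyMeasurable, ?_⟩
  rw [hasFiniteIntegral_iff_ofReal (.of_forall fun x => le_min zero_le_one (sq_nonneg x))]
  exact hint.lt_top

lemma integrableOn_of_norm_le_mul_min_one_sq
    (hν : IntegrableOn (fun x : ℝ => min 1 (x ^ 2)) (Ioi 0) ν)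
    {E : Type*} [NormedAddCommGroup E] {f : ℝ → E}
    (hf : AEStronglyMeasurable f (ν.restrict (Ioi 0))) (M : ℝ)
    (hbound : ∀ x > 0, ‖f x‖ ≤ M * min 1 (x ^ 2)) :
    IntegrableOn f (Ioi 0) ν :=
  (hν.const_mul M).mono' hf <| (ae_restrict_iff' measurableSet_Ioi).2 (.of_forall hbound)

lemma sq_mul_exp_neg_le {t x : ℝ} (ht : 0 < t) (hx : 0 ≤ x) :
    x ^ 2 * Real.exp (-(t * x)) ≤ 2 / t ^ 2 := by
  have h := Real.pow_div_factorial_le_exp _ (mul_nonneg ht.le hx) 2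
  rw [Real.exp_neg, ← div_eq_mul_inv, div_le_div_iff₀ (Real.exp_pos _) (by positivity)]
  norm_num [Nat.factorial] at h
  nlinarith

lemma integrableOn_sq_mul_exp_neg
    (hν : IntegrableOn (fun x : ℝ => min 1 (x ^ 2)) (Ioi 0) ν) {t : ℝ} (ht : 0 < t) :
    IntegrableOn (fun x : ℝ => x ^ 2 * Real.exp (-(t * x))) (Ioi 0) ν := by
  refine integrableOn_of_norm_le_mul_min_one_sq hν (by fun_prop) (1 + 2 / t ^ 2) fun x hx => ?_
  have hexp : Real.exp (-(t * x)) ≤ 1 := Real.exp_le_one_iff.2 (by nlinarith)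
  have hbdd := sq_mul_exp_neg_le ht hx.le
  rw [Real.norm_of_nonneg (by positivity)]
  rcases min_cases 1 (x ^ 2) with ⟨h, _⟩ | ⟨h, _⟩ <;> rw [h] <;>
    nlinarith [sq_nonneg x, Real.exp_pos (-(t * x)), div_nonneg zero_le_two (sq_nonneg t)]

lemma integrableOn_one_sub_cos_mul_exp_neg
    (hν : IntegrableOn (fun x : ℝ => min 1 (x ^ 2)) (Ioi 0) ν) {w : ℝ} (hw : 0 ≤ w) (l : ℝ) :
    IntegrableOn (fun x : ℝ => (1 - Real.cos (l * x)) * Real.exp (-(w * x))) (Ioi 0) ν := by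
  refine integrableOn_of_norm_le_mul_min_one_sq hν (by fun_prop) (2 + l ^ 2) fun x hx => ?_
  have hexp : Real.exp (-(w * x)) ≤ 1 := Real.exp_le_one_iff.2 (by nlinarith)
  have hcos_ge := Real.one_sub_sq_div_two_le_cos (x := l * x)
  have hcos_le := Real.cos_le_one (l * x)
  have hcos_ge' := Real.neg_one_le_cos (l * x)
  rw [Real.norm_of_nonneg (by have := Real.exp_pos (-(w * x)); nlinarith)]
  rcases min_cases 1 (x ^ 2) with ⟨h, _⟩ | ⟨h, _⟩ <;> rw [h] <;>
    nlinarith [sq_nonneg x, sq_nonneg l, Real.exp_pos (-(w * x))]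

lemma norm_cexp_neg_le_one {u : ℂ} (hu : 0 ≤ u.re) : ‖Complex.exp (-u)‖ ≤ 1 := by
  rw [Complex.norm_exp, Complex.neg_re, Real.exp_le_one_iff]
  linarith

lemma norm_cexp_neg_sub_one_add_le {u : ℂ} (hu : 0 ≤ u.re) :
    ‖Complex.exp (-u) - 1 + u‖ ≤ 3 * ‖u‖ ^ 2 := by
  rcases le_or_gt ‖u‖ 1 with h | h
  · have := Complex.norm_exp_sub_one_sub_id_le (x := -u) (by rwa [norm_neg])
    rw [norm_neg, sub_neg_eq_add] at this
    nlinarith [sq_nonneg ‖u‖]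
  · calc ‖Complex.exp (-u) - 1 + u‖ ≤ ‖Complex.exp (-u)‖ + ‖(1 : ℂ)‖ + ‖u‖ :=
          (norm_add_le _ _).trans (add_le_add_left (norm_sub_le _ _) _)
      _ ≤ 3 * ‖u‖ ^ 2 := by
        rw [norm_one]; nlinarith [norm_cexp_neg_le_one hu]

lemma integrableOn_laplace_integrand
    (hν : IntegrableOn (fun x : ℝ => min 1 (x ^ 2)) (Ioi 0) ν) {z : ℂ} (hz : 0 ≤ z.re) :
    IntegrableOn (fun x : ℝ => Complex.exp (-(z * x)) - 1 +
      z * x * (if x < 1 then (1 : ℂ) else 0)) (Ioi 0) ν := by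
  have hmeas : Measurable fun x : ℝ => Complex.exp (-(z * x)) - 1 +
      z * x * (if x < 1 then (1 : ℂ) else 0) :=
    (by fun_prop : Measurable fun x : ℝ => Complex.exp (-(z * x)) - 1).add <|
      (by fun_prop : Measurable fun x : ℝ => z * x).mul
        (Measurable.ite measurableSet_Iio measurable_const measurable_const)
  refine integrableOn_of_norm_le_mul_min_one_sq hν hmeas.aestronglyMeasurable
    (3 * ‖z‖ ^ 2 + 2) fun x hx => ?_
  have hzx : 0 ≤ (z * x).re := by simpa using mul_nonneg hz hx.le
  have hnorm : ‖z * x‖ = ‖z‖ * x := by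
    rw [norm_mul, Complex.norm_real, Real.norm_of_nonneg hx.le]
  split_ifs with h1
  · rw [mul_one, min_eq_right (by nlinarith)]
    have := norm_cexp_neg_sub_one_add_le hzx
    rw [hnorm] at this
    nlinarith [sq_nonneg x]
  · rw [mul_zero, add_zero, min_eq_left (by nlinarith), mul_one]
    calc ‖Complex.exp (-(z * x)) - 1‖ ≤ ‖Complex.exp (-(z * x))‖ + ‖(1 : ℂ)‖ := norm_sub_le _ _
      _ ≤ 3 * ‖z‖ ^ 2 + 2 := by
        rw [norm_one]; nlinarith [norm_cexp_neg_le_one hzx, sq_nonneg ‖z‖]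

lemma re_laplace_integrand_sub (w l x : ℝ) :
    ((Complex.exp (-(w * x)) - 1 + w * x * (if x < 1 then (1 : ℂ) else 0)) -
      (Complex.exp (-((w + Complex.I * l) * x)) - 1 +
        (w + Complex.I * l) * x * (if x < 1 then (1 : ℂ) else 0))).re =
      (1 - Real.cos (l * x)) * Real.exp (-(w * x)) := by
  split_ifs <;> simp [Complex.exp_re, Complex.mul_re, Complex.mul_im] <;> ring_nf

lemma re_laplaceC_sub (hν : IntegrableOn (fun x : ℝ => min 1 (x ^ 2)) (Ioi 0) ν)
    (σ b : ℝ) {w : ℝ} (hw : 0 ≤ w) (l : ℝ) :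
    (laplaceC σ b ν w - laplaceC σ b ν (w + Complex.I * l)).re =
      σ ^ 2 * l ^ 2 + ∫ x in Ioi (0:ℝ), (1 - Real.cos (l * x)) * Real.exp (-(w * x)) ∂ν := by
  have hF := integrableOn_laplace_integrand hν (z := w) (by simpa using hw)
  have hG := integrableOn_laplace_integrand hν (z := w + Complex.I * l) (by simpa using hw)
  rw [laplaceC, laplaceC, add_sub_add_comm, ← integral_sub hF hG, Complex.add_re]
  congr 1
  · simp [Complex.mul_re, Complex.mul_im, sq]
    ring
  · refine (integral_re (hF.sub hG)).symm.trans ?_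
    exact setIntegral_congr_fun measurableSet_Ioi fun x _ => re_laplace_integrand_sub w l x

lemma setIntegral_Ioi_sq_mul_exp_neg_le
    (hν : IntegrableOn (fun x : ℝ => min 1 (x ^ 2)) (Ioi 0) ν)
    {a s t : ℝ} (ha : 0 ≤ a) (hs : 0 < s) (hst : s ≤ t) :
    ∫ x in Ioi a, x ^ 2 * Real.exp (-(t * x)) ∂ν ≤
      Real.exp (-((t - s) * a)) * ∫ x in Ioi (0:ℝ), x ^ 2 * Real.exp (-(s * x)) ∂ν := by
  have hJs := integrableOn_sq_mul_exp_neg hν hs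
  have hsub : Ioi a ⊆ Ioi (0:ℝ) := Ioi_subset_Ioi ha
  calc ∫ x in Ioi a, x ^ 2 * Real.exp (-(t * x)) ∂ν
      ≤ ∫ x in Ioi a, Real.exp (-((t - s) * a)) * (x ^ 2 * Real.exp (-(s * x))) ∂ν := by
        refine setIntegral_mono_on
          ((integrableOn_sq_mul_exp_neg hν (hs.trans_le hst)).mono_set hsub)
          ((hJs.mono_set hsub).const_mul _) measurableSet_Ioi fun x (hx : a < x) => ?_
        have : Real.exp (-(t * x)) ≤ Real.exp (-((t - s) * a)) * Real.exp (-(s * x)) := by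
          rw [← Real.exp_add, Real.exp_le_exp]; nlinarith
        calc x ^ 2 * Real.exp (-(t * x))
            ≤ x ^ 2 * (Real.exp (-((t - s) * a)) * Real.exp (-(s * x))) := by gcongr
          _ = _ := by ring
    _ = Real.exp (-((t - s) * a)) * ∫ x in Ioi a, x ^ 2 * Real.exp (-(s * x)) ∂ν :=
        integral_const_mul _ _
    _ ≤ _ := mul_le_mul_of_nonneg_left
        (setIntegral_mono_set hJs (.of_forall fun x => by positivity) hsub.eventuallyLE)
        (Real.exp_pos _).le

lemma sq_mul_setIntegral_Ioc_le (hν : IntegrableOn (fun x : ℝ => min 1 (x ^ 2)) (Ioi 0) ν)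
    {a l t w : ℝ} (hw : 0 ≤ w) (hwt : w ≤ t) (ht : 0 < t) (hla : |l| * a ≤ π) :
    2 / π ^ 2 * l ^ 2 * ∫ x in Ioc 0 a, x ^ 2 * Real.exp (-(t * x)) ∂ν ≤
      ∫ x in Ioi (0:ℝ), (1 - Real.cos (l * x)) * Real.exp (-(w * x)) ∂ν := by
  have hcos_int := integrableOn_one_sub_cos_mul_exp_neg hν hw l
  rw [← integral_const_mul]
  calc ∫ x in Ioc 0 a, 2 / π ^ 2 * l ^ 2 * (x ^ 2 * Real.exp (-(t * x))) ∂ν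
      ≤ ∫ x in Ioc 0 a, (1 - Real.cos (l * x)) * Real.exp (-(w * x)) ∂ν := by
        refine setIntegral_mono_on
          (((integrableOn_sq_mul_exp_neg hν ht).mono_set Ioc_subset_Ioi_self).const_mul _)
          (hcos_int.mono_set Ioc_subset_Ioi_self) measurableSet_Ioc fun x ⟨hx0, hxa⟩ => ?_
        have hlx : |l * x| ≤ π := by
          rw [abs_mul, abs_of_pos hx0]; nlinarith [abs_nonneg l]
        have hcos_le := Real.cos_le_one_sub_mul_cos_sq hlx
        have hexp : Real.exp (-(t * x)) ≤ Real.exp (-(w * x)) := by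
          rw [Real.exp_le_exp]; nlinarith
        calc 2 / π ^ 2 * l ^ 2 * (x ^ 2 * Real.exp (-(t * x)))
            = 2 / π ^ 2 * (l * x) ^ 2 * Real.exp (-(t * x)) := by ring
          _ ≤ (1 - Real.cos (l * x)) * Real.exp (-(w * x)) := by
            gcongr
            · linarith [Real.cos_le_one (l * x)]
            · linarith
    _ ≤ ∫ x in Ioi (0:ℝ), (1 - Real.cos (l * x)) * Real.exp (-(w * x)) ∂ν :=
        setIntegral_mono_set hcos_int
          (.of_forall fun x => mul_nonneg (by linarith [Real.cos_le_one (l * x)]) (by positivity))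
          Ioc_subset_Ioi_self.eventuallyLE

lemma exists_one_le_exp_neg_le_mul_rpow {a ε : ℝ} (ha : 0 < a) (hε : 0 < ε) (s : ℝ) :
    ∃ K, 1 ≤ K ∧ Real.exp (-((K - 1) * a)) ≤ ε * K ^ s := by
  obtain ⟨K, hK, hK1⟩ := (((tendsto_rpow_mul_exp_neg_mul_atTop_nhds_zero (-s) a ha).eventually
    (ge_mem_nhds (by positivity : 0 < ε * Real.exp (-a)))).and (eventually_ge_atTop 1)).exists
  have hK0 : 0 < K := by linarith
  refine ⟨K, hK1, ?_⟩
  calc Real.exp (-((K - 1) * a)) = K ^ s * (K ^ (-s) * Real.exp (-a * K)) * Real.exp a := by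
        rw [← mul_assoc, ← Real.rpow_add hK0, add_neg_cancel, Real.rpow_zero, one_mul,
          ← Real.exp_add]
        ring_nf
    _ ≤ K ^ s * (ε * Real.exp (-a)) * Real.exp a := by gcongr
    _ = ε * K ^ s := by
        rw [mul_assoc, mul_assoc, ← Real.exp_add, neg_add_cancel, Real.exp_zero]
        ring

lemma two_div_pi_sq_mul_sub_le_re_laplaceC_sub
    (hν : IntegrableOn (fun x : ℝ => min 1 (x ^ 2)) (Ioi 0) ν) {σ b : ℝ} {φ'' : ℝ → ℝ}
    (hφ'' : ∀ t : ℝ, 0 < t → φ'' t = 2 * σ ^ 2 + ∫ x in Ioi (0:ℝ), x ^ 2 * Real.exp (-(t * x)) ∂ν)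
    {w l m K : ℝ} (hw : 0 < w) (hwm : w ≤ m) (hlm : |l| ≤ m) (hK : 1 ≤ K) :
    2 / π ^ 2 * l ^ 2 * (φ'' (K * m) - Real.exp (-((K - 1) * π)) * φ'' m) ≤
      (laplaceC σ b ν w - laplaceC σ b ν (w + Complex.I * l)).re := by
  have hm : 0 < m := hw.trans_le hwm
  have hmKm : m ≤ K * m := le_mul_of_one_le_left hm.le hK
  have hKm : 0 < K * m := hm.trans_le hmKm
  set a := π / m with ha_def
  have ha : 0 < a := div_pos pi_pos hm
  have hla : |l| * a ≤ π :=
    calc |l| * a ≤ m * a := by gcongr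
      _ = π := by rw [ha_def]; field_simp
  have hsplit := setIntegral_union (Ioc_disjoint_Ioi le_rfl) measurableSet_Ioi
    ((integrableOn_sq_mul_exp_neg hν hKm).mono_set Ioc_subset_Ioi_self)
    ((integrableOn_sq_mul_exp_neg hν hKm).mono_set (Ioi_subset_Ioi ha.le))
  rw [Ioc_union_Ioi_eq_Ioi ha.le] at hsplit
  have htail := setIntegral_Ioi_sq_mul_exp_neg_le hν ha.le hm hmKm
  rw [show (K * m - m) * a = (K - 1) * π by rw [ha_def]; field_simp] at htail
  have hlow := sq_mul_setIntegral_Ioc_le hν hw.le (hwm.trans hmKm) hKm hla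
  have hπ : 2 / π ^ 2 * 2 ≤ 1 := by
    rw [div_mul_eq_mul_div, div_le_one (by positivity)]; nlinarith [pi_gt_three]
  rw [re_laplaceC_sub hν σ b hw.le l, hφ'' _ hKm, hφ'' m hm]
  calc 2 / π ^ 2 * l ^ 2 * (2 * σ ^ 2 + ∫ x in Ioi 0, x ^ 2 * Real.exp (-(K * m * x)) ∂ν -
        Real.exp (-((K - 1) * π)) * (2 * σ ^ 2 + ∫ x in Ioi 0, x ^ 2 * Real.exp (-(m * x)) ∂ν))
      ≤ 2 / π ^ 2 * l ^ 2 * (2 * σ ^ 2 + ∫ x in Ioc 0 a, x ^ 2 * Real.exp (-(K * m * x)) ∂ν) := by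
        gcongr
        have := Real.exp_pos (-((K - 1) * π))
        nlinarith [sq_nonneg σ]
    _ = 2 / π ^ 2 * 2 * (σ ^ 2 * l ^ 2) +
          2 / π ^ 2 * l ^ 2 * ∫ x in Ioc 0 a, x ^ 2 * Real.exp (-(K * m * x)) ∂ν := by ring
    _ ≤ σ ^ 2 * l ^ 2 +
          ∫ x in Ioi (0:ℝ), (1 - Real.cos (l * x)) * Real.exp (-(w * x)) ∂ν :=
        add_le_add (mul_le_of_le_one_left (by positivity) hπ) hlow

end LaplaceExponent

theorem statement8_general
    (ν : Measure ℝ)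
    (hint : ∫⁻ x in Ioi (0:ℝ), ENNReal.ofReal (min 1 (x ^ 2)) ∂ν ≠ ⊤)
    (σ b : ℝ)
    (φ'' : ℝ → ℝ)
    (hφ'' : ∀ l : ℝ, 0 < l → φ'' l = 2 * σ ^ 2 + ∫ x in Ioi (0:ℝ), x ^ 2 * Real.exp (-(l * x)) ∂ν)
    (α c x₀ : ℝ) (hc : c ∈ Ioc (0:ℝ) 1) (hx₀ : 0 ≤ x₀)
    (hscal : WLSC φ'' (α - 2) c x₀) :
    ∃ C : ℝ, 0 < C ∧ ∀ w : ℝ, x₀ < w → ∀ l : ℝ,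
      C * l ^ 2 * φ'' (max |l| w) ≤
        (laplaceC σ b ν (w : ℂ) - laplaceC σ b ν ((w : ℂ) + Complex.I * (l : ℂ))).re := by
  have hν := integrableOn_min_one_sq_of_lintegral_ne_top hint
  obtain ⟨K, hK, hexpK⟩ := exists_one_le_exp_neg_le_mul_rpow pi_pos (half_pos hc.1) (α - 2)
  refine ⟨c * K ^ (α - 2) / π ^ 2, by have := hc.1; positivity, fun w hw l => ?_⟩
  have hw0 : 0 < w := hx₀.trans_lt hw
  set m := max |l| w
  have hm : 0 < m := lt_max_of_lt_right hw0
  have hφm : 0 ≤ φ'' m := by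
    rw [hφ'' m hm]
    exact add_nonneg (by positivity) (setIntegral_nonneg measurableSet_Ioi fun x _ => by positivity)
  have hscal_m := hscal K hK m (hw.trans_le (le_max_right _ _))
  have hgap : c / 2 * K ^ (α - 2) * φ'' m ≤ φ'' (K * m) - Real.exp (-((K - 1) * π)) * φ'' m := by
    nlinarith [mul_le_mul_of_nonneg_right hexpK hφm]
  calc c * K ^ (α - 2) / π ^ 2 * l ^ 2 * φ'' m
      = 2 / π ^ 2 * l ^ 2 * (c / 2 * K ^ (α - 2) * φ'' m) := by ring
    _ ≤ 2 / π ^ 2 * l ^ 2 * (φ'' (K * m) - Real.exp (-((K - 1) * π)) * φ'' m) := by gcongr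
    _ ≤ _ := two_div_pi_sq_mul_sub_le_re_laplaceC_sub hν hφ'' hw0 (le_max_right _ _)
        (le_max_left _ _) hK

/-- Lemma 1. -/
theorem statement8
    (ν : Measure ℝ) [SigmaFinite ν]
    (hint : ∫⁻ x in Ioi (0:ℝ), ENNReal.ofReal (min 1 (x ^ 2)) ∂ν ≠ ⊤)
    (σ b : ℝ) (hσ : 0 ≤ σ)
    (φ φ' φ'' : ℝ → ℝ)
    (hφ : ∀ l : ℝ, 0 ≤ l → φ l = σ ^ 2 * l ^ 2 - b * l +
      ∫ x in Ioi (0:ℝ), (Real.exp (-(l * x)) - 1 + l * x * (if x < 1 then 1 else 0)) ∂ν)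
    (hD1 : ∀ x : ℝ, 0 < x → HasDerivAt φ (φ' x) x)
    (hD2 : ∀ x : ℝ, 0 < x → HasDerivAt φ' (φ'' x) x)
    (hφ'' : ∀ l : ℝ, 0 < l → φ'' l = 2 * σ ^ 2 + ∫ x in Ioi (0:ℝ), x ^ 2 * Real.exp (-(l * x)) ∂ν)
    (α c x₀ : ℝ) (hα : 0 < α) (hc : c ∈ Ioc (0:ℝ) 1) (hx₀ : 0 ≤ x₀)
    (hscal : WLSC φ'' (α - 2) c x₀) :
    ∃ C : ℝ, 0 < C ∧ ∀ w : ℝ, x₀ < w → ∀ l : ℝ,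
      C * l ^ 2 * φ'' (max |l| w) ≤
        (laplaceC σ b ν (w : ℂ) - laplaceC σ b ν ((w : ℂ) + Complex.I * (l : ℂ))).re :=
  statement8_general ν hint σ b φ'' hφ'' α c x₀ hc hx₀ hscal

end
end

section
/- (Proposition 9) Suppose φ'' ∈ WLSC(α−2, c, x₀) for some c ∈ (0,1], x₀ ≥ 0 and α > 0. Then there is a constant C > 0 such that for all x > x₀, x φ'(x) − φ(x) ≤ C x² φ''(x). -/
open MeasureTheory Real Set Filter

noncomputable section

/-!
Write `G(x) = x φ'(x) - φ(x)`, so that `G' = x φ''(x)`. Weak lower scaling of `φ''` gives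
`s φ''(s) ≤ c⁻¹ x^{2-α} φ''(x) s^{α-1}` for `x₀ < s ≤ x`, and integrating gives
`G(x) - G(t) ≤ (cα)⁻¹ x² φ''(x)` for `x₀ < t ≤ x`. Convexity of `φ` gives
`G(t) ≤ φ(2t) - 2φ(t)`, which tends to `K = φ(2x₀) - 2φ(x₀)` as `t ↓ x₀` (by dominated
convergence when `x₀ = 0`, where `K = 0`). If `K > 0`, then `x₀ > 0` and `φ''(2x₀) > 0`, and
scaling bounds `x² φ''(x)` below by a positive constant on `(x₀, ∞)`, which absorbs `K`.
-/

open Topology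

lemma WLSC.to_bigPhi {f : ℝ → ℝ} {τ c x₁ : ℝ} (hf : WLSC f τ c x₁) :
    WLSC (bigPhi f) (τ + 2) c x₁ := by
  intro l hl x hx
  have h := mul_le_mul_of_nonneg_left (hf l hl x hx) (sq_nonneg (l * x))
  rw [bigPhi, bigPhi, rpow_add (zero_lt_one.trans_le hl), rpow_two]
  linarith

lemma WLSC.integral_mul_le {f : ℝ → ℝ} {α c x₀ t x : ℝ} (hf : WLSC f (α - 2) c x₀)
    (hα : 0 < α) (hc : 0 < c) (hx₀ : 0 ≤ x₀) (ht : x₀ < t) (htx : t ≤ x)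
    (hfi : IntervalIntegrable (fun s => s * f s) volume t x) (hfx : 0 ≤ f x) :
    ∫ s in t..x, s * f s ≤ (c * α)⁻¹ * (x ^ 2 * f x) := by
  have ht0 : 0 < t := hx₀.trans_lt ht
  have hx0 : 0 < x := ht0.trans_le htx
  set B := f x / (c * x ^ (α - 2))
  have hpt : ∀ s ∈ Icc t x, s * f s ≤ B * s ^ (α - 1) := by
    rintro s ⟨hts, hsx⟩
    have hs0 : 0 < s := ht0.trans_le hts
    have h := hf (x / s) ((one_le_div hs0).2 hsx) s (ht.trans_le hts)
    rw [div_mul_cancel₀ _ hs0.ne', div_rpow hx0.le hs0.le, mul_div_assoc', div_mul_eq_mul_div,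
      div_le_iff₀ (rpow_pos_of_pos hs0 _)] at h
    rw [show α - 1 = 1 + (α - 2) by ring, rpow_add hs0, rpow_one, div_mul_eq_mul_div,
      le_div_iff₀ (by positivity)]
    nlinarith
  calc ∫ s in t..x, s * f s ≤ ∫ s in t..x, B * s ^ (α - 1) :=
        intervalIntegral.integral_mono_on htx hfi
          ((intervalIntegral.intervalIntegrable_rpow' (by linarith)).const_mul B) hpt
    _ = B * ((x ^ α - t ^ α) / α) := by
        rw [intervalIntegral.integral_const_mul, integral_rpow (.inl (by linarith)),
          sub_add_cancel]
    _ ≤ B * (x ^ α / α) := by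
        have : 0 ≤ t ^ α := rpow_nonneg ht0.le _
        gcongr
        linarith
    _ = (c * α)⁻¹ * (x ^ 2 * f x) := by
        have hxα2 : x ^ α = x ^ 2 * x ^ (α - 2) := by
          rw [← rpow_natCast, ← rpow_add hx0]; norm_num
        rw [hxα2]
        simp only [B]
        field_simp

lemma WLSC.le_sq_mul_of_antitoneOn {f : ℝ → ℝ} {α c x₀ x : ℝ} (hf : WLSC f (α - 2) c x₀)
    (hanti : AntitoneOn f (Ioi 0)) (hα : 0 < α) (hc : c ∈ Ioc (0 : ℝ) 1) (hx₀ : 0 < x₀)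
    (hf₀ : 0 ≤ f (2 * x₀)) (hx : x₀ < x) :
    c * x₀ ^ 2 * f (2 * x₀) ≤ x ^ 2 * f x := by
  obtain ⟨hc0, hc1⟩ := hc
  rcases le_or_gt x (2 * x₀) with hx2 | hx2
  · have hfx : f (2 * x₀) ≤ f x := hanti (hx₀.trans hx) (by simp; positivity) hx2
    calc c * x₀ ^ 2 * f (2 * x₀) ≤ 1 * x ^ 2 * f (2 * x₀) := by gcongr
      _ ≤ x ^ 2 * f x := by rw [one_mul]; gcongr
  · have h := hf.to_bigPhi (x / (2 * x₀)) ((one_le_div (by positivity)).2 hx2.le) (2 * x₀)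
      (by linarith)
    rw [sub_add_cancel, div_mul_cancel₀ _ (by positivity)] at h
    have hl : 1 ≤ (x / (2 * x₀)) ^ α :=
      one_le_rpow ((one_le_div (by positivity)).2 hx2.le) hα.le
    calc c * x₀ ^ 2 * f (2 * x₀) ≤ c * 1 * bigPhi f (2 * x₀) := by
          rw [bigPhi]; nlinarith [mul_nonneg hc0.le hf₀]
      _ ≤ c * (x / (2 * x₀)) ^ α * bigPhi f (2 * x₀) := by
          have : 0 ≤ bigPhi f (2 * x₀) := by rw [bigPhi]; positivity
          gcongr
      _ ≤ x ^ 2 * f x := h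

lemma mul_deriv_le_sub {φ φ' : ℝ → ℝ} (hD : ∀ x : ℝ, 0 < x → HasDerivAt φ (φ' x) x)
    (hmono : MonotoneOn φ' (Ioi 0)) {t u : ℝ} (ht : 0 < t) (htu : t ≤ u) :
    (u - t) * φ' t ≤ φ u - φ t := by
  have hpos : ∀ s ∈ Icc t u, 0 < s := fun s hs => ht.trans_le hs.1
  have hg : MonotoneOn (fun s => φ s - s * φ' t) (Icc t u) := by
    refine monotoneOn_of_hasDerivWithinAt_nonneg (convex_Icc t u)
      (fun s hs => ((hD s (hpos s hs)).continuousAt.sub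
        (continuousAt_id.mul continuousAt_const)).continuousWithinAt) (fun s hs => ?_)
      (fun s hs => ?_) (f' := fun s => φ' s - φ' t)
    · rw [interior_Icc] at hs
      exact (((hD s (ht.trans hs.1)).sub ((hasDerivAt_id s).mul_const _)).congr_deriv
        (by simp)).hasDerivWithinAt
    · rw [interior_Icc] at hs
      exact sub_nonneg.2 (hmono ht (ht.trans hs.1) hs.1.le)
  have := hg ⟨le_rfl, htu⟩ ⟨htu, le_rfl⟩ htu
  simp only at this
  linarith

lemma integral_mul_sndDeriv {φ φ' φ'' : ℝ → ℝ} (hD1 : ∀ x : ℝ, 0 < x → HasDerivAt φ (φ' x) x)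
    (hD2 : ∀ x : ℝ, 0 < x → HasDerivAt φ' (φ'' x) x) {t x : ℝ} (ht : 0 < t) (htx : t ≤ x)
    (hi : IntervalIntegrable φ'' volume t x) :
    ∫ s in t..x, s * φ'' s = x * φ' x - φ x - (t * φ' t - φ t) := by
  refine intervalIntegral.integral_eq_sub_of_hasDerivAt (f := fun y => y * φ' y - φ y)
    (fun s hs => ?_) (hi.continuousOn_mul continuousOn_id)
  rw [uIcc_of_le htx] at hs
  have hs0 : 0 < s := ht.trans_le hs.1
  exact (((hasDerivAt_id s).mul (hD2 s hs0)).sub (hD1 s hs0)).congr_deriv (by simp)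

lemma sq_mul_exp_neg_le_s10 {l x : ℝ} (hl : 0 < l) (hx : 0 ≤ x) :
    x ^ 2 * exp (-(l * x)) ≤ max 1 (2 / l ^ 2) * min 1 (x ^ 2) := by
  have hexp : 0 < exp (l * x) := exp_pos _
  have h1 : x ^ 2 * exp (-(l * x)) ≤ x ^ 2 := by
    have : exp (-(l * x)) ≤ 1 := exp_le_one_iff.2 (by nlinarith)
    nlinarith [sq_nonneg x]
  have h2 : x ^ 2 * exp (-(l * x)) ≤ 2 / l ^ 2 := by
    have := pow_div_factorial_le_exp (l * x) (by positivity) 2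
    rw [exp_neg, ← div_eq_mul_inv, div_le_div_iff₀ hexp (by positivity)]
    norm_num at this
    nlinarith
  rcases le_total (x ^ 2) 1 with hx1 | hx1
  · rw [min_eq_right hx1]
    nlinarith [le_max_left 1 (2 / l ^ 2), sq_nonneg x]
  · rw [min_eq_left hx1, mul_one]
    exact h2.trans (le_max_right _ _)

lemma abs_exp_neg_mul_sub_one_add_le {l x : ℝ} (hl : l ∈ Icc (0 : ℝ) 1) (hx : 0 < x) :
    |exp (-(l * x)) - 1 + l * x * (if x < 1 then 1 else 0)| ≤ min 1 (x ^ 2) := by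
  obtain ⟨hl0, hl1⟩ := hl
  have hlx : 0 ≤ l * x := by positivity
  rcases lt_or_ge x 1 with hx1 | hx1
  · rw [if_pos hx1, mul_one, min_eq_right (by nlinarith)]
    have h := abs_exp_sub_one_sub_id_le (x := -(l * x))
      (by rw [abs_neg, abs_of_nonneg hlx]; nlinarith)
    rw [sub_neg_eq_add] at h
    nlinarith [mul_le_mul hl1 hl1 hl0 zero_le_one, sq_nonneg x]
  · rw [if_neg (not_lt.2 hx1), mul_zero, add_zero, min_eq_left (by nlinarith), abs_le]
    constructor
    · linarith [exp_pos (-(l * x))]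
    · linarith [exp_le_one_iff.2 (neg_nonpos.2 hlx)]

namespace LaplaceExponent

variable {ν : Measure ℝ} {σ b : ℝ} {φ φ' φ'' : ℝ → ℝ}

lemma integrableOn_min_one_sq
    (hint : ∫⁻ x in Ioi (0:ℝ), ENNReal.ofReal (min 1 (x ^ 2)) ∂ν ≠ ⊤) :
    IntegrableOn (fun x : ℝ => min 1 (x ^ 2)) (Ioi 0) ν := by
  refine ⟨by fun_prop, ?_⟩
  rw [hasFiniteIntegral_iff_ofReal (.of_forall fun x => by positivity)]
  exact hint.lt_top

lemma integrableOn_sq_mul_exp_neg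
    (hint : ∫⁻ x in Ioi (0:ℝ), ENNReal.ofReal (min 1 (x ^ 2)) ∂ν ≠ ⊤) {l : ℝ} (hl : 0 < l) :
    IntegrableOn (fun x : ℝ => x ^ 2 * exp (-(l * x))) (Ioi 0) ν := by
  refine ((integrableOn_min_one_sq hint).const_mul (max 1 (2 / l ^ 2))).mono' (by fun_prop) ?_
  filter_upwards [ae_restrict_mem measurableSet_Ioi] with x (hx : 0 < x)
  rw [norm_of_nonneg (by positivity)]
  exact sq_mul_exp_neg_le_s10 hl hx.le

lemma continuousWithinAt_Ici_zero
    (hint : ∫⁻ x in Ioi (0:ℝ), ENNReal.ofReal (min 1 (x ^ 2)) ∂ν ≠ ⊤)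
    (hφ : ∀ l : ℝ, 0 ≤ l → φ l = σ ^ 2 * l ^ 2 - b * l +
      ∫ x in Ioi (0:ℝ), (exp (-(l * x)) - 1 + l * x * (if x < 1 then 1 else 0)) ∂ν) :
    ContinuousWithinAt φ (Ici 0) 0 := by
  have hI : ContinuousWithinAt (fun l => ∫ x in Ioi (0:ℝ),
      (exp (-(l * x)) - 1 + l * x * (if x < 1 then 1 else 0)) ∂ν) (Ici 0) 0 := by
    refine continuousWithinAt_of_dominated (bound := fun x => min 1 (x ^ 2))
      (.of_forall fun l => ?_) ?_ (integrableOn_min_one_sq hint) (.of_forall fun x => by fun_prop)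
    · exact (Measurable.add (by fun_prop) ((by fun_prop : Measurable fun x : ℝ => l * x).mul
        (measurable_const.ite measurableSet_Iio measurable_const))).aestronglyMeasurable
    filter_upwards [Icc_mem_nhdsGE zero_lt_one] with l hl
    filter_upwards [ae_restrict_mem measurableSet_Ioi] with x (hx : 0 < x)
    exact abs_exp_neg_mul_sub_one_add_le hl hx
  exact ((by fun_prop : Continuous fun l : ℝ => σ ^ 2 * l ^ 2 - b * l).continuousWithinAt.add
    hI).congr (fun l hl => hφ l hl) (hφ 0 le_rfl)

lemma continuousWithinAt_Ioi
    (hint : ∫⁻ x in Ioi (0:ℝ), ENNReal.ofReal (min 1 (x ^ 2)) ∂ν ≠ ⊤)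
    (hφ : ∀ l : ℝ, 0 ≤ l → φ l = σ ^ 2 * l ^ 2 - b * l +
      ∫ x in Ioi (0:ℝ), (exp (-(l * x)) - 1 + l * x * (if x < 1 then 1 else 0)) ∂ν)
    (hD1 : ∀ x : ℝ, 0 < x → HasDerivAt φ (φ' x) x) {x₀ : ℝ} (hx₀ : 0 ≤ x₀) :
    ContinuousWithinAt φ (Ioi x₀) x₀ := by
  rcases hx₀.eq_or_lt with rfl | hpos
  · exact (continuousWithinAt_Ici_zero hint hφ).mono Ioi_subset_Ici_self
  · exact (hD1 x₀ hpos).continuousAt.continuousWithinAt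

lemma sndDeriv_nonneg
    (hφ'' : ∀ l : ℝ, 0 < l → φ'' l = 2 * σ ^ 2 + ∫ x in Ioi (0:ℝ), x ^ 2 * exp (-(l * x)) ∂ν)
    {l : ℝ} (hl : 0 < l) : 0 ≤ φ'' l := by
  rw [hφ'' l hl]
  positivity

lemma antitoneOn_sndDeriv
    (hint : ∫⁻ x in Ioi (0:ℝ), ENNReal.ofReal (min 1 (x ^ 2)) ∂ν ≠ ⊤)
    (hφ'' : ∀ l : ℝ, 0 < l → φ'' l = 2 * σ ^ 2 + ∫ x in Ioi (0:ℝ), x ^ 2 * exp (-(l * x)) ∂ν) :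
    AntitoneOn φ'' (Ioi 0) := by
  intro a (ha : 0 < a) b (hb : 0 < b) hab
  rw [hφ'' a ha, hφ'' b hb]
  gcongr 2 * σ ^ 2 + ?_
  refine setIntegral_mono_on (integrableOn_sq_mul_exp_neg hint hb)
    (integrableOn_sq_mul_exp_neg hint ha) measurableSet_Ioi fun x (hx : 0 < x) => ?_
  gcongr

lemma eq_neg_mul_of_sndDeriv_eq_zero
    (hint : ∫⁻ x in Ioi (0:ℝ), ENNReal.ofReal (min 1 (x ^ 2)) ∂ν ≠ ⊤)
    (hφ : ∀ l : ℝ, 0 ≤ l → φ l = σ ^ 2 * l ^ 2 - b * l +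
      ∫ x in Ioi (0:ℝ), (exp (-(l * x)) - 1 + l * x * (if x < 1 then 1 else 0)) ∂ν)
    (hφ'' : ∀ l : ℝ, 0 < l → φ'' l = 2 * σ ^ 2 + ∫ x in Ioi (0:ℝ), x ^ 2 * exp (-(l * x)) ∂ν)
    {y : ℝ} (hy : 0 < y) (hy0 : φ'' y = 0) {l : ℝ} (hl : 0 ≤ l) : φ l = -(b * l) := by
  have hI : 0 ≤ ∫ x in Ioi (0:ℝ), x ^ 2 * exp (-(y * x)) ∂ν := by positivity
  rw [hφ'' y hy] at hy0
  have hσ : σ ^ 2 = 0 := by nlinarith [sq_nonneg σ]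
  have hI0 : ∫ x in Ioi (0:ℝ), x ^ 2 * exp (-(y * x)) ∂ν = 0 := by linarith
  have hν : ν.restrict (Ioi 0) = 0 := by
    rw [integral_eq_zero_iff_of_nonneg (fun x => by positivity)
      (integrableOn_sq_mul_exp_neg hint hy)] at hI0
    rw [← ae_eq_bot, ← eventually_false_iff_eq_bot]
    filter_upwards [hI0, ae_restrict_mem measurableSet_Ioi] with x hx (hxpos : 0 < x)
    exact (by positivity : 0 < x ^ 2 * exp (-(y * x))).ne' hx
  rw [hφ l hl, hν, integral_zero_measure, hσ]
  ring

lemma mul_deriv_sub_le_add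
    (hint : ∫⁻ x in Ioi (0:ℝ), ENNReal.ofReal (min 1 (x ^ 2)) ∂ν ≠ ⊤)
    (hφ : ∀ l : ℝ, 0 ≤ l → φ l = σ ^ 2 * l ^ 2 - b * l +
      ∫ x in Ioi (0:ℝ), (exp (-(l * x)) - 1 + l * x * (if x < 1 then 1 else 0)) ∂ν)
    (hD1 : ∀ x : ℝ, 0 < x → HasDerivAt φ (φ' x) x)
    (hD2 : ∀ x : ℝ, 0 < x → HasDerivAt φ' (φ'' x) x)
    (hφ'' : ∀ l : ℝ, 0 < l → φ'' l = 2 * σ ^ 2 + ∫ x in Ioi (0:ℝ), x ^ 2 * exp (-(l * x)) ∂ν)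
    {α c x₀ : ℝ} (hα : 0 < α) (hc : 0 < c) (hx₀ : 0 ≤ x₀) (hscal : WLSC φ'' (α - 2) c x₀)
    {x : ℝ} (hx : x₀ < x) :
    x * φ' x - φ x ≤ φ (2 * x₀) - 2 * φ x₀ + (c * α)⁻¹ * (x ^ 2 * φ'' x) := by
  have hanti := antitoneOn_sndDeriv hint hφ''
  have hmono : MonotoneOn φ' (Ioi 0) :=
    monotoneOn_of_hasDerivWithinAt_nonneg (convex_Ioi 0)
      (fun s hs => (hD2 s hs).continuousAt.continuousWithinAt)
      (fun s hs => (hD2 s (by simpa using hs)).hasDerivWithinAt)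
      (fun s hs => sndDeriv_nonneg hφ'' (by simpa using hs))
  have hdouble : Tendsto (fun t => 2 * t) (𝓝[>] x₀) (𝓝[>] (2 * x₀)) := by
    refine tendsto_nhdsWithin_of_tendsto_nhds_of_eventually_within _
      (((continuous_const_mul 2).tendsto x₀).mono_left nhdsWithin_le_nhds) ?_
    filter_upwards [self_mem_nhdsWithin] with t (ht : x₀ < t)
    exact mem_Ioi.2 (by linarith)
  have hlim : Tendsto (fun t => φ (2 * t) - 2 * φ t) (𝓝[>] x₀)
      (𝓝 (φ (2 * x₀) - 2 * φ x₀)) :=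
    ((continuousWithinAt_Ioi hint hφ hD1 (by positivity)).tendsto.comp hdouble).sub
      ((continuousWithinAt_Ioi hint hφ hD1 hx₀).tendsto.const_mul 2)
  refine sub_le_iff_le_add.1 (ge_of_tendsto hlim ?_)
  filter_upwards [self_mem_nhdsWithin, Ioc_mem_nhdsGT hx] with t (ht : x₀ < t) htx
  have ht0 : 0 < t := hx₀.trans_lt ht
  have hi : IntervalIntegrable φ'' volume t x := by
    refine (hanti.mono ?_).intervalIntegrable
    rw [uIcc_of_le htx.2]
    exact (Icc_subset_Ioi_iff htx.2).2 ht0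
  have hG := integral_mul_sndDeriv hD1 hD2 ht0 htx.2 hi
  have hscale := hscal.integral_mul_le hα hc hx₀ ht htx.2 (hi.continuousOn_mul continuousOn_id)
    (sndDeriv_nonneg hφ'' (ht0.trans_le htx.2))
  have hconv := mul_deriv_le_sub hD1 hmono ht0 (by linarith : t ≤ 2 * t)
  linarith

end LaplaceExponent

theorem statement10_general
    (ν : Measure ℝ)
    (hint : ∫⁻ x in Ioi (0:ℝ), ENNReal.ofReal (min 1 (x ^ 2)) ∂ν ≠ ⊤)
    (σ b : ℝ)
    (φ φ' φ'' : ℝ → ℝ)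
    (hφ : ∀ l : ℝ, 0 ≤ l → φ l = σ ^ 2 * l ^ 2 - b * l +
      ∫ x in Ioi (0:ℝ), (Real.exp (-(l * x)) - 1 + l * x * (if x < 1 then 1 else 0)) ∂ν)
    (hD1 : ∀ x : ℝ, 0 < x → HasDerivAt φ (φ' x) x)
    (hD2 : ∀ x : ℝ, 0 < x → HasDerivAt φ' (φ'' x) x)
    (hφ'' : ∀ l : ℝ, 0 < l → φ'' l = 2 * σ ^ 2 + ∫ x in Ioi (0:ℝ), x ^ 2 * Real.exp (-(l * x)) ∂ν)
    (α c x₀ : ℝ) (hα : 0 < α) (hc : c ∈ Ioc (0:ℝ) 1) (hx₀ : 0 ≤ x₀)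
    (hscal : WLSC φ'' (α - 2) c x₀) :
    ∃ C : ℝ, 0 < C ∧ ∀ x : ℝ, x₀ < x →
      x * φ' x - φ x ≤ C * (x ^ 2 * φ'' x) := by
  have hc0 : 0 < c := hc.1
  have hbound := fun x (hx : x₀ < x) =>
    LaplaceExponent.mul_deriv_sub_le_add hint hφ hD1 hD2 hφ'' hα hc0 hx₀ hscal hx
  set K := φ (2 * x₀) - 2 * φ x₀
  rcases le_or_gt K 0 with hK | hK
  · exact ⟨(c * α)⁻¹, by positivity, fun x hx => by linarith [hbound x hx]⟩
  have hx₀pos : 0 < x₀ := hx₀.lt_of_ne <| by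
    rintro rfl
    simp [K, hφ 0 le_rfl] at hK
  have hpos : 0 < φ'' (2 * x₀) := by
    refine (LaplaceExponent.sndDeriv_nonneg hφ'' (by positivity)).lt_of_ne' fun h0 => ?_
    have hlin := fun l (hl : 0 ≤ l) =>
      LaplaceExponent.eq_neg_mul_of_sndDeriv_eq_zero hint hφ hφ'' (by positivity) h0 hl
    simp only [K, hlin (2 * x₀) (by positivity), hlin x₀ hx₀] at hK
    linarith
  set m := c * x₀ ^ 2 * φ'' (2 * x₀)
  have hm : 0 < m := mul_pos (by positivity) hpos
  refine ⟨(c * α)⁻¹ + K / m, by positivity, fun x hx => ?_⟩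
  have hlow : m ≤ x ^ 2 * φ'' x :=
    hscal.le_sq_mul_of_antitoneOn (LaplaceExponent.antitoneOn_sndDeriv hint hφ'') hα hc hx₀pos
      hpos.le hx
  have hK' : K ≤ K / m * (x ^ 2 * φ'' x) := by
    rw [div_mul_eq_mul_div, le_div_iff₀ hm]
    nlinarith
  linarith [hbound x hx]

/-- Proposition 9. -/
theorem statement10
    (ν : Measure ℝ) [SigmaFinite ν]
    (hint : ∫⁻ x in Ioi (0:ℝ), ENNReal.ofReal (min 1 (x ^ 2)) ∂ν ≠ ⊤)
    (σ b : ℝ) (hσ : 0 ≤ σ)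
    (φ φ' φ'' : ℝ → ℝ)
    (hφ : ∀ l : ℝ, 0 ≤ l → φ l = σ ^ 2 * l ^ 2 - b * l +
      ∫ x in Ioi (0:ℝ), (Real.exp (-(l * x)) - 1 + l * x * (if x < 1 then 1 else 0)) ∂ν)
    (hD1 : ∀ x : ℝ, 0 < x → HasDerivAt φ (φ' x) x)
    (hD2 : ∀ x : ℝ, 0 < x → HasDerivAt φ' (φ'' x) x)
    (hφ'' : ∀ l : ℝ, 0 < l → φ'' l = 2 * σ ^ 2 + ∫ x in Ioi (0:ℝ), x ^ 2 * Real.exp (-(l * x)) ∂ν)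
    (α c x₀ : ℝ) (hα : 0 < α) (hc : c ∈ Ioc (0:ℝ) 1) (hx₀ : 0 ≤ x₀)
    (hscal : WLSC φ'' (α - 2) c x₀) :
    ∃ C : ℝ, 0 < C ∧ ∀ x : ℝ, x₀ < x →
      x * φ' x - φ x ≤ C * (x ^ 2 * φ'' x) :=
  statement10_general ν hint σ b φ φ' φ'' hφ hD1 hD2 hφ'' α c x₀ hα hc hx₀ hscal

end
end
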